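/- Assume S has no conjugate points. Then: (i) for every x ∈ ℝ^d the constant sequence x_n = x (n ∈ ℤ) is extremal, i.e. ∂₂S(x,x) + ∂₁S(x,x) = 0 for all x; (ii) every extremal sequence (x_n)_{n∈ℤ} is either injective or constant. -/

import Mathlib

noncomputable section

/-- Configuration space `ℝ^d` with the Euclidean norm. -/
abbrev Ed (d : ℕ) := EuclideanSpace ℝ (Fin d)

/-- The point of `ℝ^d` with integer coordinates given by `r ∈ ℤ^d`. -/
def intVec (d : ℕ) (r : Fin d → ℤ) : Ed d := WithLp.toLp 2 (fun i => (r i : ℝ))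

/-- A generating function: a `C²` map `S : ℝ^d × ℝ^d → ℝ` which is `ℤ^d`-periodic for
the diagonal action and satisfies the uniform twist condition
`∑_{i,j} ∂²S/∂xᵢ∂yⱼ (x,y) ξᵢ ξⱼ ≤ -A‖ξ‖²` (expressed via the second derivative of `S`
applied to `((ξ,0),(0,ξ))`). -/
def IsGenFn {d : ℕ} (S : Ed d × Ed d → ℝ) : Prop :=
  ContDiff ℝ 2 S ∧
  (∀ (r : Fin d → ℤ) (x y : Ed d), S (x + intVec d r, y + intVec d r) = S (x, y)) ∧
  ∃ A : ℝ, 0 < A ∧ ∀ (x y ξ : Ed d),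
    iteratedFDeriv ℝ 2 S (x, y) ![(ξ, 0), (0, ξ)] ≤ -A * ‖ξ‖ ^ 2

/-- `∂₁S`, the partial differential of `S` with respect to its first variable. -/
def D1 {d : ℕ} (S : Ed d × Ed d → ℝ) (x y : Ed d) : Ed d →L[ℝ] ℝ :=
  fderiv ℝ (fun z => S (z, y)) x

/-- `∂₂S`, the partial differential of `S` with respect to its second variable. -/
def D2 {d : ℕ} (S : Ed d × Ed d → ℝ) (x y : Ed d) : Ed d →L[ℝ] ℝ :=
  fderiv ℝ (fun z => S (x, z)) y

/-- A bi-infinite sequence `(x_n)_{n∈ℤ}` is extremal if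
`∂₂S(x_{n-1}, x_n) + ∂₁S(x_n, x_{n+1}) = 0` for every `n`. -/
def IsExtremal {d : ℕ} (S : Ed d × Ed d → ℝ) (u : ℤ → Ed d) : Prop :=
  ∀ n : ℤ, D2 S (u (n - 1)) (u n) + D1 S (u n) (u (n + 1)) = 0

/-- The action `S(x_0, …, x_n)` of a finite sequence. -/
def act {d : ℕ} (S : Ed d × Ed d → ℝ) (n : ℕ) (γ : ℕ → Ed d) : ℝ :=
  ∑ k ∈ Finset.range n, S (γ k, γ (k + 1))

/-- The sequence `(x, z_1, …, z_{N-1}, y)` built from interior points `z`. -/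
def path {d : ℕ} (x y : Ed d) (N : ℕ) (z : Fin (N - 1) → Ed d) : ℕ → Ed d :=
  fun k => if h0 : k = 0 then x else if h : k < N then z ⟨k - 1, by omega⟩ else y

/-- The fixed-endpoint action `S_{x,y,N} : (x_1, …, x_{N-1}) ↦ S(x, x_1, …, x_{N-1}, y)`. -/
def fixedAct {d : ℕ} (S : Ed d × Ed d → ℝ) (x y : Ed d) (N : ℕ) :
    (Fin (N - 1) → Ed d) → ℝ :=
  fun z => act S N (path x y N z)

/-- `S` has no conjugate points: for all `x, y` and `N ≥ 2`, the fixed-endpoint action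
`S_{x,y,N}` has exactly one critical point, and attains its global minimum there. -/
def NoConjPts {d : ℕ} (S : Ed d × Ed d → ℝ) : Prop :=
  ∀ (x y : Ed d) (N : ℕ), 2 ≤ N →
    ∃ z : Fin (N - 1) → Ed d,
      fderiv ℝ (fixedAct S x y N) z = 0 ∧
      (∀ w, fixedAct S x y N z ≤ fixedAct S x y N w) ∧
      (∀ z', fderiv ℝ (fixedAct S x y N) z' = 0 → z' = z)

/-- `A_N(x,y)`: the minimum of the fixed-endpoint action `S_{x,y,N}` for `N ≥ 2`,
and `S(x,y)` for `N = 1`. -/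
def AN {d : ℕ} (S : Ed d × Ed d → ℝ) (N : ℕ) (x y : Ed d) : ℝ :=
  if N ≤ 1 then S (x, y) else sInf (Set.range (fixedAct S x y N))

/-- The minimizing holonomic value `Σ̃(S)`. -/
def holVal {d : ℕ} (S : Ed d × Ed d → ℝ) : ℝ :=
  sInf { v : ℝ | ∃ n : ℕ, 1 ≤ n ∧ ∃ γ : ℕ → Ed d,
    (∃ r : Fin d → ℤ, γ n - γ 0 = intVec d r) ∧ v = act S n γ / n }

/-- The normalized action `S̃(x_0, …, x_n) = S(x_0, …, x_n) - n Σ̃(S)`. -/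
def actTilde {d : ℕ} (S : Ed d × Ed d → ℝ) (n : ℕ) (γ : ℕ → Ed d) : ℝ :=
  act S n γ - n * holVal S

/-- The Mañé potential `π(x,y)`. -/
def manePot {d : ℕ} (S : Ed d × Ed d → ℝ) (x y : Ed d) : ℝ :=
  sInf { v : ℝ | ∃ n : ℕ, 1 ≤ n ∧ ∃ γ : ℕ → Ed d,
    γ 0 = x ∧ (∃ r : Fin d → ℤ, γ n - y = intVec d r) ∧ v = actTilde S n γ }

/-- The Aubry set `Ā(S) ⊂ ℝ^d × ℝ^d`. -/
def aubry {d : ℕ} (S : Ed d × Ed d → ℝ) : Set (Ed d × Ed d) :=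
  { p | ∀ ε > 0, ∃ n : ℕ, 1 ≤ n ∧ ∃ γ : ℕ → Ed d,
      (∃ r : Fin d → ℤ, γ n - γ 0 = intVec d r) ∧
      ‖p.1 - γ 0‖ < ε ∧ ‖p.2 - γ 1‖ < ε ∧ actTilde S n γ < ε }

/-- The generating function `S_c(x,y) = S(x,y) + c(x - y)` associated to a cohomology
class `c ∈ (ℝ^d)*`. -/
def Sc {d : ℕ} (S : Ed d × Ed d → ℝ) (c : Ed d →L[ℝ] ℝ) : Ed d × Ed d → ℝ :=
  fun p => S p + c (p.1 - p.2)

/-!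
The diagonal `x ↦ S(x, x)` is `ℤ^d`-periodic, so it attains its maximum at some `x₁`, where the
constant sequence is extremal. Being a critical point of `S_{x₁,x₁,N}`, it is the minimiser, so
`N S(x₁, x₁) ≤ S(x₁, q) + (N - 2) S(q, q) + S(q, x₁)` for every `q` and `N`; letting `N → ∞`
gives `S(q, q) ≥ S(x₁, x₁)`. Hence the diagonal is constant and its derivative
`∂₂S(x, x) + ∂₁S(x, x)` vanishes, which is (i).

For (ii), if `u m = u (m + N)` then the segment `u m, …, u (m + N)` and the constant sequence
`u m` are both critical points of `S_{u m, u m, N}`, so `u (m + 1) = u m`. The twist condition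
makes `∂₁S(x, ·)` and `∂₂S(·, y)` injective, so an extremal sequence is determined by two
consecutive terms, and `u` is constant.
-/

open Function

section GeneratingFunction

variable {d : ℕ} {S : Ed d × Ed d → ℝ}

lemma IsGenFn.differentiable (hS : IsGenFn S) : Differentiable ℝ S :=
  hS.1.differentiable (by norm_num)

lemma fderiv_apply_eq_D1_add_D2 (hS : Differentiable ℝ S) (a b ξ ζ : Ed d) :
    fderiv ℝ S (a, b) (ξ, ζ) = D1 S a b ξ + D2 S a b ζ := by
  have h1 : HasFDerivAt (fun z => S (z, b)) ((fderiv ℝ S (a, b)).comp (.inl ℝ _ _)) a :=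
    (hS _).hasFDerivAt.comp a ((hasFDerivAt_id a).prodMk (hasFDerivAt_const b a))
  have h2 : HasFDerivAt (fun z => S (a, z)) ((fderiv ℝ S (a, b)).comp (.inr ℝ _ _)) b :=
    (hS _).hasFDerivAt.comp b ((hasFDerivAt_const a b).prodMk (hasFDerivAt_id b))
  rw [D1, D2, h1.fderiv, h2.fderiv]
  simp [← map_add]

lemma fderiv_diag_eq_D2_add_D1 (hS : Differentiable ℝ S) (x : Ed d) :
    fderiv ℝ (fun z => S (z, z)) x = D2 S x x + D1 S x x := by
  have h : HasFDerivAt (fun z => S (z, z))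
      ((fderiv ℝ S (x, x)).comp ((ContinuousLinearMap.id ℝ _).prod (.id ℝ _))) x :=
    (hS _).hasFDerivAt.comp x ((hasFDerivAt_id x).prodMk (hasFDerivAt_id x))
  ext ξ
  simp [h.fderiv, fderiv_apply_eq_D1_add_D2 hS, add_comm]

lemma apply_add_lt_of_fderiv_apply_neg {E F : Type*} [NormedAddCommGroup E] [NormedSpace ℝ E]
    [NormedAddCommGroup F] [NormedSpace ℝ F]
    {G : E → F →L[ℝ] ℝ} (hG : Differentiable ℝ G) {v : E} {w : F}
    (hneg : ∀ q, fderiv ℝ G q v w < 0) (p : E) : G (p + v) w < G p w := by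
  have hderiv : ∀ t : ℝ, HasDerivAt (fun t : ℝ => G (p + t • v) w)
      (fderiv ℝ G (p + t • v) v w) t := by
    intro t
    have hline : HasDerivAt (fun t : ℝ => p + t • v) v t := by
      simpa using ((hasDerivAt_id t).smul_const v).const_add p
    simpa using ((hG _).hasFDerivAt.comp_hasDerivAt t hline).clm_apply (hasDerivAt_const t w)
  simpa using strictAnti_of_hasDerivAt_neg hderiv (fun t => hneg _) zero_lt_one

lemma IsGenFn.fderiv_fderiv_inl_inr_neg (hS : IsGenFn S) (p : Ed d × Ed d) {ξ : Ed d}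
    (hξ : ξ ≠ 0) : fderiv ℝ (fderiv ℝ S) p (ξ, 0) (0, ξ) < 0 := by
  obtain ⟨-, -, A, hA, htwist⟩ := hS
  have h := htwist p.1 p.2 ξ
  rw [iteratedFDeriv_two_apply] at h
  have : 0 < A * ‖ξ‖ ^ 2 := by positivity
  simp only [Matrix.cons_val_zero, Matrix.cons_val_one] at h
  linarith

lemma IsGenFn.differentiable_fderiv (hS : IsGenFn S) : Differentiable ℝ (fderiv ℝ S) :=
  (hS.1.fderiv_right (m := 1) le_rfl).differentiable (by norm_num)

lemma IsGenFn.injective_D2 (hS : IsGenFn S) (y : Ed d) : Injective fun x => D2 S x y := by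
  intro a b hab
  by_contra hne
  have hξ : a - b ≠ 0 := sub_ne_zero.mpr hne
  have h := apply_add_lt_of_fderiv_apply_neg hS.differentiable_fderiv (v := (a - b, 0))
    (w := (0, a - b)) (fun q => hS.fderiv_fderiv_inl_inr_neg q hξ) (b, y)
  simp only [Prod.mk_add_mk, add_sub_cancel, add_zero,
    fderiv_apply_eq_D1_add_D2 hS.differentiable, map_zero, zero_add] at h
  exact h.ne (congrArg (· (a - b)) hab)

lemma IsGenFn.injective_D1 (hS : IsGenFn S) (x : Ed d) : Injective (D1 S x) := by
  intro a b hab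
  by_contra hne
  have hξ : a - b ≠ 0 := sub_ne_zero.mpr hne
  have hsymm (q : Ed d × Ed d) := (hS.1.contDiffAt (x := q)).isSymmSndFDerivAt (by simp)
  have h := apply_add_lt_of_fderiv_apply_neg hS.differentiable_fderiv (v := (0, a - b))
    (w := (a - b, 0)) (fun q => hsymm q _ _ ▸ hS.fderiv_fderiv_inl_inr_neg q hξ) (x, b)
  simp only [Prod.mk_add_mk, add_sub_cancel, add_zero,
    fderiv_apply_eq_D1_add_D2 hS.differentiable, map_zero] at h
  exact h.ne (congrArg (· (a - b)) hab)

end GeneratingFunction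

lemma exists_forall_le_of_intVec_periodic {d : ℕ} {f : Ed d → ℝ} (hf : Continuous f)
    (hper : ∀ r x, f (x + intVec d r) = f x) : ∃ x₀, ∀ x, f x ≤ f x₀ := by
  have hK : IsCompact (WithLp.toLp 2 '' Set.Icc (0 : Fin d → ℝ) 1) :=
    isCompact_Icc.image (PiLp.continuous_toLp 2 _)
  obtain ⟨x₀, -, hmax⟩ := hK.exists_isMaxOn ((Set.nonempty_Icc.2 zero_le_one).image _)
    hf.continuousOn
  refine ⟨x₀, fun x => ?_⟩
  have hx : x = WithLp.toLp 2 (fun i => Int.fract (x i)) + intVec d (fun i => ⌊x i⌋) := by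
    ext i; simp [intVec]
  rw [hx, hper]
  exact hmax ⟨_, ⟨fun i => Int.fract_nonneg _, fun i => (Int.fract_lt_one _).le⟩, rfl⟩

section FixedEndpointAction

variable {d : ℕ} {S : Ed d × Ed d → ℝ}

/-- The derivative of `z ↦ path x y N z k`, which does not depend on `x`, `y`, `z`. -/
def pathDeriv (d N k : ℕ) : (Fin (N - 1) → Ed d) →L[ℝ] Ed d :=
  if h : k ≠ 0 ∧ k < N then ContinuousLinearMap.proj (⟨k - 1, by omega⟩ : Fin (N - 1)) else 0

@[simp] lemma pathDeriv_zero (N : ℕ) : pathDeriv d N 0 = 0 := by simp [pathDeriv]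

@[simp] lemma pathDeriv_self (N : ℕ) : pathDeriv d N N = 0 := by simp [pathDeriv]

lemma hasFDerivAt_path (x y : Ed d) (N k : ℕ) (z : Fin (N - 1) → Ed d) :
    HasFDerivAt (fun w => path x y N w k) (pathDeriv d N k) z := by
  by_cases hk : k ≠ 0 ∧ k < N
  · have hfun : (fun w => path x y N w k) = fun w => w ⟨k - 1, by omega⟩ := by
      funext w; simp [path, hk.1, hk.2]
    rw [hfun, pathDeriv, dif_pos hk]
    exact (ContinuousLinearMap.proj (R := ℝ) (φ := fun _ : Fin (N - 1) => Ed d) _).hasFDerivAt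
  · rw [pathDeriv, dif_neg hk]
    convert hasFDerivAt_const (if k = 0 then x else y) z using 2
    simp only [path]
    split_ifs <;> tauto

lemma hasFDerivAt_fixedAct (hS : Differentiable ℝ S) (x y : Ed d) (N : ℕ)
    (z : Fin (N - 1) → Ed d) :
    HasFDerivAt (fixedAct S x y N)
      (∑ k ∈ Finset.range N, (fderiv ℝ S (path x y N z k, path x y N z (k + 1))).comp
        ((pathDeriv d N k).prod (pathDeriv d N (k + 1)))) z :=
  HasFDerivAt.fun_sum (u := Finset.range N) fun k _ => (hS _).hasFDerivAt.comp z
    ((hasFDerivAt_path x y N k z).prodMk (hasFDerivAt_path x y N (k + 1) z))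

lemma path_interior {x y : Ed d} {N : ℕ} {γ : ℕ → Ed d} (h0 : γ 0 = x) (hN : γ N = y) {k : ℕ}
    (hk : k ≤ N) : path x y N (fun j => γ (j + 1)) k = γ k := by
  simp only [path]
  split_ifs with hk0 hkN
  · rw [hk0, h0]
  · congr; omega
  · rw [show k = N by omega, hN]

lemma hasFDerivAt_fixedAct_eq_zero (hS : Differentiable ℝ S) {x y : Ed d} {N : ℕ}
    {γ : ℕ → Ed d} (h0 : γ 0 = x) (hN : γ N = y)
    (hγ : ∀ k, k + 2 ≤ N → D2 S (γ k) (γ (k + 1)) + D1 S (γ (k + 1)) (γ (k + 2)) = 0) :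
    HasFDerivAt (𝕜 := ℝ) (fixedAct S x y N) 0 (fun j : Fin (N - 1) => γ (j + 1)) := by
  convert hasFDerivAt_fixedAct hS x y N (fun j => γ (j + 1)) using 1
  ext η
  simp only [sum_apply, ContinuousLinearMap.comp_apply, ContinuousLinearMap.prod_apply,
    fderiv_apply_eq_D1_add_D2 hS, zero_apply, Finset.sum_add_distrib]
  cases N with
  | zero => simp
  | succ M =>
    rw [Finset.sum_range_succ', Finset.sum_range_succ]
    simp only [pathDeriv_zero, pathDeriv_self, zero_apply, map_zero,
      add_zero, ← Finset.sum_add_distrib]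
    refine (Finset.sum_eq_zero fun k hk => ?_).symm
    have hkM := Finset.mem_range.mp hk
    rw [path_interior h0 hN (by omega), path_interior h0 hN (by omega),
      path_interior h0 hN (by omega), add_comm, ← add_apply,
      hγ k (by omega), zero_apply]

lemma fixedAct_const (x y q : Ed d) (M : ℕ) :
    fixedAct S x y (M + 2) (fun _ => q) = S (x, q) + M * S (q, q) + S (q, y) := by
  simp only [fixedAct, act]
  rw [Finset.sum_range_succ', Finset.sum_range_succ]
  have hq : ∀ k, k ≠ 0 → k < M + 2 → path x y (M + 2) (fun _ => q) k = q := by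
    intro k hk0 hk
    simp [path, hk0, hk]
  rw [Finset.sum_congr rfl fun k hk => by
    rw [hq (k + 1) (by omega) (by simp at hk; omega), hq (k + 1 + 1) (by omega)
      (by simp at hk; omega)]]
  simp [path]
  ring

end FixedEndpointAction

section NoConjugatePoints

variable {d : ℕ} {S : Ed d × Ed d → ℝ}

lemma isExtremal_const_iff (x : Ed d) :
    IsExtremal S (fun _ => x) ↔ D2 S x x + D1 S x x = 0 := by
  simp [IsExtremal]

lemma NoConjPts.le_of_hasFDerivAt_zero (h : NoConjPts S) {x y : Ed d} {N : ℕ} (hN : 2 ≤ N)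
    {z : Fin (N - 1) → Ed d} (hz : HasFDerivAt (𝕜 := ℝ) (fixedAct S x y N) 0 z)
    (w : Fin (N - 1) → Ed d) :
    fixedAct S x y N z ≤ fixedAct S x y N w := by
  obtain ⟨z₀, -, hmin, huniq⟩ := h x y N hN
  exact huniq z hz.fderiv ▸ hmin w

lemma NoConjPts.eq_of_hasFDerivAt_zero (h : NoConjPts S) {x y : Ed d} {N : ℕ} (hN : 2 ≤ N)
    {z z' : Fin (N - 1) → Ed d} (hz : HasFDerivAt (𝕜 := ℝ) (fixedAct S x y N) 0 z)
    (hz' : HasFDerivAt (𝕜 := ℝ) (fixedAct S x y N) 0 z') : z = z' := by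
  obtain ⟨z₀, -, -, huniq⟩ := h x y N hN
  rw [huniq z hz.fderiv, huniq z' hz'.fderiv]

lemma NoConjPts.diag_eq_of_isMax (h : NoConjPts S) (hS : Differentiable ℝ S) {x₁ : Ed d}
    (hcrit : D2 S x₁ x₁ + D1 S x₁ x₁ = 0) (hmax : ∀ q, S (q, q) ≤ S (x₁, x₁)) (q : Ed d) :
    S (q, q) = S (x₁, x₁) := by
  have hdetour : ∀ M : ℕ, (M + 2) * S (x₁, x₁) ≤ S (x₁, q) + M * S (q, q) + S (q, x₁) := by
    intro M
    have hz := hasFDerivAt_fixedAct_eq_zero (N := M + 2) hS (γ := fun _ => x₁) rfl rfl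
      fun _ _ => hcrit
    have hle := h.le_of_hasFDerivAt_zero (by omega) hz (fun _ => q)
    rw [fixedAct_const, fixedAct_const] at hle
    linarith
  refine le_antisymm (hmax q) (not_lt.1 fun hlt => ?_)
  obtain ⟨M, hM⟩ := exists_nat_gt
    ((S (x₁, q) + S (q, x₁) - 2 * S (x₁, x₁)) / (S (x₁, x₁) - S (q, q)))
  rw [div_lt_iff₀ (by linarith)] at hM
  nlinarith [hdetour M]

lemma NoConjPts.D2_add_D1_self_eq_zero (h : NoConjPts S) (hS : IsGenFn S) (x : Ed d) :
    D2 S x x + D1 S x x = 0 := by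
  have hdiff := hS.differentiable
  obtain ⟨x₁, hmax⟩ := exists_forall_le_of_intVec_periodic (f := fun x => S (x, x))
    (hdiff.continuous.comp (continuous_id.prodMk continuous_id)) fun r x => hS.2.1 r x x
  have hcrit : D2 S x₁ x₁ + D1 S x₁ x₁ = 0 := by
    rw [← fderiv_diag_eq_D2_add_D1 hdiff]
    exact IsLocalMax.fderiv_eq_zero (Filter.Eventually.of_forall hmax)
  have hconst : (fun x => S (x, x)) = fun _ => S (x₁, x₁) :=
    funext (h.diag_eq_of_isMax hdiff hcrit hmax)
  rw [← fderiv_diag_eq_D2_add_D1 hdiff, hconst]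
  exact fderiv_const_apply _

end NoConjugatePoints

section ExtremalSequences

variable {d : ℕ} {S : Ed d × Ed d → ℝ} {u : ℤ → Ed d}

lemma IsExtremal.eq_of_eq_of_eq_succ (hS : IsGenFn S) {v : ℤ → Ed d} (hu : IsExtremal S u)
    (hv : IsExtremal S v) {m : ℤ} (h₀ : u m = v m) (h₁ : u (m + 1) = v (m + 1)) : u = v := by
  have key : ∀ n, u n = v n ∧ u (n + 1) = v (n + 1) := by
    intro n
    induction n using Int.inductionOn' (b := m) with
    | zero => exact ⟨h₀, h₁⟩
    | succ k _ ih =>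
      have hu' := hu (k + 1)
      have hv' := hv (k + 1)
      rw [add_sub_cancel_right, ih.1, ih.2] at hu'
      rw [add_sub_cancel_right] at hv'
      exact ⟨ih.2, hS.injective_D1 _ (add_left_cancel (hu'.trans hv'.symm))⟩
    | pred k _ ih =>
      have hu' := hu k
      have hv' := hv k
      rw [ih.1, ih.2] at hu'
      rw [sub_add_cancel]
      exact ⟨hS.injective_D2 _ (add_right_cancel (hu'.trans hv'.symm)), ih.1⟩
  exact funext fun n => (key n).1

lemma IsExtremal.succ_eq_of_add_eq (h : NoConjPts S) (hS : Differentiable ℝ S)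
    (hdiag : ∀ x, D2 S x x + D1 S x x = 0) (hu : IsExtremal S u) {m : ℤ} {N : ℕ} (hN : 1 ≤ N)
    (hum : u (m + N) = u m) : u (m + 1) = u m := by
  obtain rfl | hN₂ := hN.eq_or_lt
  · exact_mod_cast hum
  have hseg := hasFDerivAt_fixedAct_eq_zero (x := u m) (N := N) hS (γ := fun k => u (m + k))
    (by simp) hum
    fun k _ => by convert hu (m + k + 1) using 3 <;> push_cast <;> ring_nf
  have hconst := hasFDerivAt_fixedAct_eq_zero (N := N) hS (γ := fun _ => u m) rfl rfl
    fun _ _ => hdiag _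
  simpa using congrFun (h.eq_of_hasFDerivAt_zero hN₂ hseg hconst) ⟨0, by omega⟩

lemma IsExtremal.exists_succ_eq_of_not_injective (h : NoConjPts S) (hS : Differentiable ℝ S)
    (hdiag : ∀ x, D2 S x x + D1 S x x = 0) (hu : IsExtremal S u) (hinj : ¬Injective u) :
    ∃ m, u (m + 1) = u m := by
  obtain ⟨a, b, hab, hne⟩ := not_injective_iff.1 hinj
  obtain ⟨m, n, hmn, hum⟩ : ∃ m n, m < n ∧ u n = u m := by
    rcases hne.lt_or_gt with hlt | hlt
    exacts [⟨a, b, hlt, hab.symm⟩, ⟨b, a, hlt, hab⟩]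
  refine ⟨m, hu.succ_eq_of_add_eq h hS hdiag (N := (n - m).toNat) (by omega) ?_⟩
  rwa [show m + (n - m).toNat = n by omega]

end ExtremalSequences

theorem stmt_10_general (d : ℕ) (S : Ed d × Ed d → ℝ) (hS : IsGenFn S)
    (h : NoConjPts S) :
    ((∀ x : Ed d, IsExtremal S (fun _ => x)) ∧ ∀ x : Ed d, D2 S x x + D1 S x x = 0) ∧
    (∀ u : ℤ → Ed d, IsExtremal S u →
      Function.Injective u ∨ ∃ x : Ed d, ∀ n : ℤ, u n = x) := by
  have hdiag : ∀ x, D2 S x x + D1 S x x = 0 := h.D2_add_D1_self_eq_zero hS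
  have hconst : ∀ x : Ed d, IsExtremal S (fun _ => x) :=
    fun x => (isExtremal_const_iff x).2 (hdiag x)
  refine ⟨⟨hconst, hdiag⟩, fun u hu => or_iff_not_imp_left.2 fun hinj => ?_⟩
  obtain ⟨m, hm⟩ := hu.exists_succ_eq_of_not_injective h hS.differentiable hdiag hinj
  exact ⟨u m, congrFun (hu.eq_of_eq_of_eq_succ hS (hconst (u m)) rfl hm)⟩

/-- If `S` has no conjugate points, then (i) every constant sequence is extremal, i.e.
`∂₂S(x,x) + ∂₁S(x,x) = 0` for all `x`, and (ii) every extremal sequence is either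
injective or constant. -/
theorem stmt_10 (d : ℕ) (hd : 1 ≤ d) (S : Ed d × Ed d → ℝ) (hS : IsGenFn S)
    (h : NoConjPts S) :
    ((∀ x : Ed d, IsExtremal S (fun _ => x)) ∧ ∀ x : Ed d, D2 S x x + D1 S x x = 0) ∧
    (∀ u : ℤ → Ed d, IsExtremal S u →
      Function.Injective u ∨ ∃ x : Ed d, ∀ n : ℤ, u n = x) :=
  stmt_10_general d S hS h

end
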